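/- Let 𝒪 = {(x,v,a) ∈ ℝ³ : v ≠ 0}, let f(x,v,a) = 1/(2v³), and let X₁(x,v,a) = (0,0,2v), X₂(x,v,a) = (0,v,2a), X₃(x,v,a) = (v,a,3a²/(2v)) be vector fields on 𝒪. Then for each α ∈ {1,2,3} the vector field f·Xα is divergence-free on 𝒪, i.e. the trace of the Fréchet derivative of the map p ↦ f(p)·Xα(p) vanishes at every point of 𝒪. (This is the coordinate expression of the invariance ℒ_{Xα}Θ_S = 0 of the multisymplectic volume form Θ_S = (1/(2v³)) da ∧ dv ∧ dx under the Vessiot–Guldberg Lie algebra of the Schwarz equation.) -/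
import Mathlib


/-- The divergence of a vector field on ℝⁿ at a point: the trace of its
Fréchet derivative there. -/
noncomputable def vdiv {n : ℕ} (V : (Fin n → ℝ) → (Fin n → ℝ))
    (p : Fin n → ℝ) : ℝ :=
  LinearMap.trace ℝ (Fin n → ℝ) (fderiv ℝ V p).toLinearMap

/-- Coordinates on 𝒪 ⊂ ℝ³ are (x,v,a) = (p 0, p 1, p 2). -/
def schX₁ : (Fin 3 → ℝ) → (Fin 3 → ℝ) := fun p => ![0, 0, 2 * p 1]

def schX₂ : (Fin 3 → ℝ) → (Fin 3 → ℝ) := fun p => ![0, p 1, 2 * p 2]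

noncomputable def schX₃ : (Fin 3 → ℝ) → (Fin 3 → ℝ) :=
  fun p => ![p 1, p 2, 3 * (p 2) ^ 2 / (2 * p 1)]

/-- The coefficient f(x,v,a) = 1/(2v³) of the multisymplectic volume form
Θ_S = (1/(2v³)) da ∧ dv ∧ dx. -/
noncomputable def schF : (Fin 3 → ℝ) → ℝ := fun p => 1 / (2 * (p 1) ^ 3)

/-- The divergence as a sum of diagonal entries of the Fréchet derivative. -/
lemma vdiv_eq {n : ℕ} (V : (Fin n → ℝ) → (Fin n → ℝ)) (p : Fin n → ℝ) :
    vdiv V p = ∑ i, fderiv ℝ V p (Pi.single i 1) i := by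
  unfold vdiv
  rw [LinearMap.trace_eq_matrix_trace ℝ (Pi.basisFun ℝ (Fin n))]
  simp [Matrix.trace, LinearMap.toMatrix_apply, Matrix.diag]

set_option maxHeartbeats 1000000 in
/-- For each α ∈ {1,2,3}, the vector field f·Xα is divergence-free on
𝒪 = {v ≠ 0}: the coordinate expression of ℒ_{Xα}Θ_S = 0. -/
theorem schwarz_multisymplectic_invariance :
    ∀ p : Fin 3 → ℝ, p 1 ≠ 0 →
      vdiv (fun q => schF q • schX₁ q) p = 0 ∧
      vdiv (fun q => schF q • schX₂ q) p = 0 ∧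
      vdiv (fun q => schF q • schX₃ q) p = 0 := by
  intro p hp
  have hv : HasFDerivAt (fun q : Fin 3 → ℝ => q 1)
      (ContinuousLinearMap.proj (R := ℝ) (φ := fun _ : Fin 3 => ℝ) 1) p :=
    (ContinuousLinearMap.proj (R := ℝ) (φ := fun _ : Fin 3 => ℝ) 1).hasFDerivAt
  have ha : HasFDerivAt (fun q : Fin 3 → ℝ => q 2)
      (ContinuousLinearMap.proj (R := ℝ) (φ := fun _ : Fin 3 => ℝ) 2) p :=
    (ContinuousLinearMap.proj (R := ℝ) (φ := fun _ : Fin 3 => ℝ) 2).hasFDerivAt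
  have hdne : 2 * (p 1) ^ 3 ≠ 0 := mul_ne_zero two_ne_zero (pow_ne_zero 3 hp)
  have hdne' : 2 * (p 1 * (p 1 * p 1)) ≠ 0 := by
    intro h; apply hdne; rw [← h]; ring
  have h2ne : 2 * p 1 ≠ 0 := mul_ne_zero two_ne_zero hp
  have hf : HasFDerivAt (fun q : Fin 3 → ℝ => (2 * (q 1 * (q 1 * q 1)))⁻¹) _ p :=
    (hasFDerivAt_inv hdne').comp p ((hv.mul (hv.mul hv)).const_mul 2)
  -- scalar component derivatives
  have hA : HasFDerivAt (fun q : Fin 3 → ℝ => (2 * (q 1 * (q 1 * q 1)))⁻¹ * (2 * q 1)) _ p :=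
    hf.mul (hv.const_mul 2)
  have hB : HasFDerivAt (fun q : Fin 3 → ℝ => (2 * (q 1 * (q 1 * q 1)))⁻¹ * q 1) _ p :=
    hf.mul hv
  have hC : HasFDerivAt (fun q : Fin 3 → ℝ => (2 * (q 1 * (q 1 * q 1)))⁻¹ * (2 * q 2)) _ p :=
    hf.mul (ha.const_mul 2)
  have hD : HasFDerivAt (fun q : Fin 3 → ℝ => (2 * (q 1 * (q 1 * q 1)))⁻¹ * q 2) _ p :=
    hf.mul ha
  have hE : HasFDerivAt
      (fun q : Fin 3 → ℝ => (2 * (q 1 * (q 1 * q 1)))⁻¹ * (3 * (q 2 * q 2) * (2 * q 1)⁻¹)) _ p :=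
    hf.mul (((ha.mul ha).const_mul 3).mul ((hasFDerivAt_inv h2ne).comp p (hv.const_mul 2)))
  refine ⟨?_, ?_, ?_⟩
  · -- field X₁
    have hfun : (fun q => schF q • schX₁ q)
        = (fun q (i : Fin 3) =>
            ![(0:ℝ), 0, (2 * (q 1 * (q 1 * q 1)))⁻¹ * (2 * q 1)] i) := by
      funext q i
      have h : (2 * (q 1 * (q 1 * q 1))) = 2 * (q 1) ^ 3 := by ring
      fin_cases i <;> simp [schF, schX₁, h, one_div]
    rw [vdiv_eq, hfun]
    rw [fderiv_pi (by
      intro i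
      fin_cases i <;>
        simp only [Matrix.cons_val_zero, Matrix.cons_val_one, Matrix.head_cons,
          Matrix.cons_val_two, Matrix.tail_cons]
      · exact differentiableAt_const _
      · exact differentiableAt_const _
      · exact hA.differentiableAt)]
    simp only [ContinuousLinearMap.pi_apply, Fin.sum_univ_three,
      Matrix.cons_val_zero, Matrix.cons_val_one, Matrix.head_cons,
      Matrix.cons_val_two, Matrix.tail_cons]
    rw [hA.fderiv]
    simp [ContinuousLinearMap.proj_apply, Pi.single_apply]
  · -- field X₂
    have hfun : (fun q => schF q • schX₂ q)
        = (fun q (i : Fin 3) =>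
            ![(0:ℝ), (2 * (q 1 * (q 1 * q 1)))⁻¹ * q 1,
              (2 * (q 1 * (q 1 * q 1)))⁻¹ * (2 * q 2)] i) := by
      funext q i
      have h : (2 * (q 1 * (q 1 * q 1))) = 2 * (q 1) ^ 3 := by ring
      fin_cases i <;> simp [schF, schX₂, h, one_div]
    rw [vdiv_eq, hfun]
    rw [fderiv_pi (by
      intro i
      fin_cases i <;>
        simp only [Matrix.cons_val_zero, Matrix.cons_val_one, Matrix.head_cons,
          Matrix.cons_val_two, Matrix.tail_cons]
      · exact differentiableAt_const _
      · exact hB.differentiableAt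
      · exact hC.differentiableAt)]
    simp only [ContinuousLinearMap.pi_apply, Fin.sum_univ_three,
      Matrix.cons_val_zero, Matrix.cons_val_one, Matrix.head_cons,
      Matrix.cons_val_two, Matrix.tail_cons]
    rw [hB.fderiv, hC.fderiv]
    simp [ContinuousLinearMap.proj_apply, Pi.single_apply]
    field_simp
    ring
  · -- field X₃
    have hfun : (fun q => schF q • schX₃ q)
        = (fun q (i : Fin 3) =>
            ![(2 * (q 1 * (q 1 * q 1)))⁻¹ * q 1,
              (2 * (q 1 * (q 1 * q 1)))⁻¹ * q 2,
              (2 * (q 1 * (q 1 * q 1)))⁻¹ * (3 * (q 2 * q 2) * (2 * q 1)⁻¹)] i) := by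
      funext q i
      have h : (2 * (q 1 * (q 1 * q 1))) = 2 * (q 1) ^ 3 := by ring
      have h2 : q 2 * q 2 = (q 2) ^ 2 := by ring
      fin_cases i <;> simp [schF, schX₃, h, h2, one_div, div_eq_mul_inv]
    rw [vdiv_eq, hfun]
    rw [fderiv_pi (by
      intro i
      fin_cases i <;>
        simp only [Matrix.cons_val_zero, Matrix.cons_val_one, Matrix.head_cons,
          Matrix.cons_val_two, Matrix.tail_cons]
      · exact hB.differentiableAt
      · exact hD.differentiableAt
      · exact hE.differentiableAt)]
    simp only [ContinuousLinearMap.pi_apply, Fin.sum_univ_three,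
      Matrix.cons_val_zero, Matrix.cons_val_one, Matrix.head_cons,
      Matrix.cons_val_two, Matrix.tail_cons]
    rw [hB.fderiv, hD.fderiv, hE.fderiv]
    simp [ContinuousLinearMap.proj_apply, Pi.single_apply]
    field_simp
    ring
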